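/- The L^1 norm of the Dirichlet kernel satisfies the lower bound ‖D_n‖_{L^1(−π,π)} = ∫_{−π}^{π} |sin((2n+1)x/2)/(2 sin(x/2))| dx ≥ (1/π) log n for all n ≥ 2. -/

import Mathlib

open scoped Real
open MeasureTheory Finset Filter

/-- Complex Fourier coefficient of a `2π`-periodic function. -/
noncomputable def fCoef (f : ℝ → ℂ) (k : ℤ) : ℂ :=
  (1 / (2 * π)) * ∫ x in (-π)..π, f x * Complex.exp (-Complex.I * (k : ℂ) * (x : ℂ))

/-- `n`-th symmetric partial sum of the Fourier series. -/
noncomputable def pSum (f : ℝ → ℂ) (n : ℕ) (x : ℝ) : ℂ :=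
  ∑ k ∈ Finset.Icc (-(n : ℤ)) (n : ℤ), fCoef f k * Complex.exp (Complex.I * (k : ℂ) * (x : ℂ))

/-- `L¹` norm over one period. -/
noncomputable def L1 (g : ℝ → ℂ) : ℝ := ∫ x in (-π)..π, ‖g x‖

/-- Mean Value Bounded Variation Sequence (complex sense). -/
def MVBVS (c : ℕ → ℂ) : Prop :=
  (∃ θ : ℝ, 0 ≤ θ ∧ θ < π / 2 ∧ ∀ n, |(c n).arg| ≤ θ) ∧
  ∃ lam : ℝ, 2 ≤ lam ∧ ∃ C : ℝ, 0 < C ∧ ∀ m : ℕ, 1 ≤ m →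
    ∑ k ∈ Finset.Icc m (2 * m), ‖c (k + 1) - c k‖ ≤
      C / m * ∑ k ∈ Finset.Icc ⌊(m : ℝ) / lam⌋₊ ⌊lam * m⌋₊, ‖c k‖

/-- Dirichlet kernel. -/
noncomputable def Dk (k : ℕ) (x : ℝ) : ℝ :=
  Real.sin ((2 * k + 1) * x / 2) / (2 * Real.sin (x / 2))

/-- Modified conjugate kernel (depends on the fixed parameter `n`). -/
noncomputable def Dstar (n k : ℕ) (x : ℝ) : ℝ :=
  if |x| ≤ 1 / n then
    (Real.cos (x / 2) - Real.cos ((2 * k + 1) * x / 2)) / (2 * Real.sin (x / 2))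
  else -Real.cos ((2 * k + 1) * x / 2) / (2 * Real.sin (x / 2))

/-- The complex kernel `E_k = D_k + i D_k^*`. -/
noncomputable def Ek (n k : ℕ) (x : ℝ) : ℂ := (Dk k x : ℂ) + Complex.I * (Dstar n k x : ℂ)


/-! On `(0, 2π)` we have `0 < 2 sin(x/2) ≤ x` and `sin² ≤ |sin|`, so
`|D_n(x)| ≥ sin²((2n+1)x/2) / x`. Cut `[0, 2nπ/(2n+1)]` at the zeros `2kπ/(2n+1)` of `D_n`:
on the `k`-th piece `sin²((2n+1)x/2)` integrates to `π/(2n+1)` and `x ≤ 2(k+1)π/(2n+1)`, so the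
piece contributes at least `1/(2(k+1))`. Summing, `‖D_n‖₁ ≥ H_n / 2 ≥ log(n+1) / 2 ≥ log n / π`.
The bound `|D_n| ≤ 2n+1`, from `|sin(m y)| ≤ m |sin y|`, gives integrability. -/

open Real

lemma abs_sin_nat_mul_le (m : ℕ) (y : ℝ) : |sin (m * y)| ≤ m * |sin y| := by
  induction m with
  | zero => simp
  | succ m ih =>
    calc |sin ((m + 1 : ℕ) * y)| = |sin (m * y) * cos y + cos (m * y) * sin y| := by
          rw [Nat.cast_succ, add_mul, one_mul, sin_add]
      _ ≤ |sin (m * y)| * |cos y| + |cos (m * y)| * |sin y| := by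
          rw [← abs_mul, ← abs_mul]; exact abs_add_le _ _
      _ ≤ m * |sin y| * 1 + 1 * |sin y| := by
          gcongr <;> exact abs_cos_le_one _
      _ = (m + 1 : ℕ) * |sin y| := by push_cast; ring

lemma abs_Dk_le (k : ℕ) (x : ℝ) : |Dk k x| ≤ 2 * k + 1 := by
  have hnum : |sin ((2 * k + 1) * x / 2)| ≤ (2 * k + 1) * |sin (x / 2)| := by
    simpa [mul_div_assoc] using abs_sin_nat_mul_le (2 * k + 1) (x / 2)
  rw [Dk, abs_div, abs_mul, abs_two]
  refine div_le_of_le_mul₀ (by positivity) (by positivity) ?_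
  nlinarith [abs_nonneg (sin (x / 2))]

lemma intervalIntegrable_abs_Dk (k : ℕ) (a b : ℝ) :
    IntervalIntegrable (fun x => |Dk k x|) volume a b := by
  refine (intervalIntegrable_const (c := (2 * k + 1 : ℝ))).mono_fun' ?_ ?_
  · exact (show Measurable fun x => |Dk k x| by unfold Dk; fun_prop).aestronglyMeasurable
  · exact ae_of_all _ fun x => by simpa using abs_Dk_le k x

lemma sq_sin_div_le_abs_Dk (k : ℕ) {x b : ℝ} (hx : 0 ≤ x) (hxb : x ≤ b) (hb : b < 2 * π) :
    sin ((2 * k + 1) * x / 2) ^ 2 / b ≤ |Dk k x| := by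
  rcases hx.eq_or_lt with rfl | hx
  · simp
  set s := sin ((2 * k + 1) * x / 2)
  have hsin : 0 < sin (x / 2) := sin_pos_of_pos_of_lt_pi (by linarith) (by linarith)
  have hsin_le : 2 * sin (x / 2) ≤ x := by linarith [sin_le (x := x / 2) (by linarith)]
  calc s ^ 2 / b ≤ |s| / x := by
        rw [← sq_abs]
        gcongr
        exact pow_le_of_le_one (abs_nonneg s) (abs_sin_le_one _) two_ne_zero
    _ ≤ |s| / (2 * sin (x / 2)) := by gcongr
    _ = |Dk k x| := by rw [Dk, abs_div, abs_of_pos (by positivity : 0 < 2 * sin (x / 2))]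

lemma integral_sin_sq_mul_half_period {c : ℝ} (hc : c ≠ 0) (k : ℕ) :
    ∫ x in k * π / c..(k + 1) * π / c, sin (c * x) ^ 2 = π / (2 * c) := by
  have hsucc : sin ((k + 1) * π) = 0 := by exact_mod_cast sin_nat_mul_pi (k + 1)
  rw [intervalIntegral.integral_comp_mul_left (fun t => sin t ^ 2) hc, mul_div_cancel₀ _ hc,
    mul_div_cancel₀ _ hc, integral_sin_sq, sin_nat_mul_pi, hsucc, smul_eq_mul]
  field_simp
  ring

lemma inv_two_mul_succ_le_integral_abs_Dk {n k : ℕ} (hk : k < 2 * n) :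
    (2 * (k + 1) : ℝ)⁻¹ ≤
      ∫ x in 2 * k * π / (2 * n + 1)..2 * (k + 1) * π / (2 * n + 1), |Dk n x| := by
  set c : ℝ := (2 * n + 1) / 2
  have hc : 0 < c := by positivity
  have hnode : ∀ j : ℝ, 2 * j * π / (2 * n + 1) = j * π / c := fun j => by
    simp only [c]; field_simp
  have hkn : (k : ℝ) + 1 < 2 * n + 1 := by exact_mod_cast Nat.succ_lt_succ hk
  set b := (k + 1) * π / c
  have hb : b < 2 * π := by
    rw [div_lt_iff₀ hc]; simp only [c]; nlinarith [pi_pos]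
  rw [hnode, hnode]
  calc (2 * (k + 1) : ℝ)⁻¹ = (∫ x in k * π / c..b, sin (c * x) ^ 2) / b := by
        rw [integral_sin_sq_mul_half_period hc.ne']
        simp only [b]; field_simp
    _ = ∫ x in k * π / c..b, sin ((2 * n + 1) * x / 2) ^ 2 / b := by
        rw [← intervalIntegral.integral_div]; simp only [c, mul_div_right_comm]
    _ ≤ ∫ x in k * π / c..b, |Dk n x| := by
        refine intervalIntegral.integral_mono_on (by simp only [b]; gcongr; linarith)
          (Continuous.intervalIntegrable (by fun_prop) _ _) (intervalIntegrable_abs_Dk n _ _) ?_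
        intro x hx
        have hx0 : 0 ≤ x := (by positivity : (0 : ℝ) ≤ k * π / c).trans hx.1
        exact sq_sin_div_le_abs_Dk n hx0 hx.2 hb

lemma harmonic_div_two_le_integral_abs_Dk (n : ℕ) :
    (harmonic n : ℝ) / 2 ≤ ∫ x in 0..π, |Dk n x| := by
  set node : ℕ → ℝ := fun k => 2 * k * π / (2 * n + 1)
  have hnode_n : node n ≤ π := by
    rw [div_le_iff₀ (by positivity)]; nlinarith [pi_pos]
  calc (harmonic n : ℝ) / 2 = ∑ k ∈ range n, (2 * (k + 1) : ℝ)⁻¹ := by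
        simp [harmonic, div_eq_mul_inv, sum_mul]
    _ ≤ ∑ k ∈ range n, ∫ x in node k..node (k + 1), |Dk n x| := by
        refine sum_le_sum fun k hk => ?_
        simpa [node] using inv_two_mul_succ_le_integral_abs_Dk (n := n) (k := k) (by
          have := mem_range.1 hk; omega)
    _ = ∫ x in node 0..node n, |Dk n x| :=
        intervalIntegral.sum_integral_adjacent_intervals fun k _ => intervalIntegrable_abs_Dk n _ _
    _ ≤ ∫ x in 0..π, |Dk n x| :=
        intervalIntegral.integral_mono_interval (by simp [node])
          (by simp only [node]; gcongr; positivity) hnode_n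
          (ae_of_all _ fun _ => abs_nonneg _) (intervalIntegrable_abs_Dk n _ _)

theorem stmt6_general (n : ℕ) :
    (1 / π) * Real.log n ≤ ∫ x in (-π)..π, |Dk n x| := by
  have hlog : (1 / π) * Real.log n ≤ Real.log (n + 1) / 2 := by
    have hpi : 1 / π ≤ 1 / 2 := one_div_le_one_div_of_le two_pos two_le_pi
    have hmono : Real.log n ≤ Real.log (n + 1) := by
      rcases n.eq_zero_or_pos with rfl | hn
      · simp
      · exact log_le_log (by positivity) (by linarith)
    nlinarith [log_natCast_nonneg n]
  calc (1 / π) * Real.log n ≤ Real.log (n + 1) / 2 := hlog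
    _ ≤ (harmonic n : ℝ) / 2 := by
        gcongr; exact_mod_cast log_add_one_le_harmonic n
    _ ≤ ∫ x in 0..π, |Dk n x| := harmonic_div_two_le_integral_abs_Dk n
    _ ≤ ∫ x in (-π)..π, |Dk n x| :=
        intervalIntegral.integral_mono_interval (by linarith [pi_pos]) pi_pos.le le_rfl
          (ae_of_all _ fun _ => abs_nonneg _) (intervalIntegrable_abs_Dk n _ _)

theorem stmt6 (n : ℕ) (hn : 2 ≤ n) :
    (1 / π) * Real.log n ≤ ∫ x in (-π)..π, |Dk n x| :=
  stmt6_general n
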